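/- For all r ≥ 1 and n ≥ 0, Ch^{(r)}_{n,λ}(x) = Σ_{k=0}^{n} Σ_{m=0}^{k} C(n,k) · (x)_{m,λ} · S₁(k,m) · Ch^{(r)}_{n-k,λ}, expressing the higher-order degenerate Changhee polynomials of the second kind in terms of the corresponding numbers. -/

import Mathlib

open Finset PowerSeries

/-- The degenerate falling factorial `(x)_{n,λ}`. -/
noncomputable def df (l x : ℚ) (n : ℕ) : ℚ := ∏ i ∈ Finset.range n, (x - (i : ℚ) * l)

/-- The formal power series `(1+λt)^{x/λ} := Σ (x)_{n,λ} tⁿ/n!`. -/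
noncomputable def B (l x : ℚ) : PowerSeries ℚ :=
  PowerSeries.mk fun n => df l x n / n.factorial

/-- Signed Stirling numbers of the first kind. -/
def S1 : ℕ → ℕ → ℚ
  | 0, 0 => 1
  | 0, _ + 1 => 0
  | _ + 1, 0 => 0
  | n + 1, k + 1 => S1 n k - (n : ℚ) * S1 n (k + 1)

/-- Stirling numbers of the second kind. -/
def S2 : ℕ → ℕ → ℚ
  | 0, 0 => 1
  | 0, _ + 1 => 0
  | _ + 1, 0 => 0
  | n + 1, k + 1 => ((k : ℚ) + 1) * S2 n (k + 1) + S2 n k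

/-- Higher-order degenerate Changhee polynomials of the second kind, from a family `E`
(intended: order-r degenerate Euler polynomials). -/
noncomputable def Ch (E : ℕ → ℚ → ℚ) (n : ℕ) (x : ℚ) : ℚ :=
  ∑ m ∈ Finset.range (n + 1), S1 n m * E m x

/-!
On exponential generating functions, `a ↦ (Σₘ S₁(n,m) aₘ)ₙ` is substitution of `log (1 + t)`;
being a ring homomorphism there, it turns binomial convolutions into binomial convolutions.
Dividing the defining relation of `E` at `x` by the one at `0` shows that `E(·, x)` is the
binomial convolution of `(x)_{·,λ}` with `E(·, 0)`, and applying the transform gives the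
identity. Multiplicativity is checked coefficientwise by induction on `n`, the inductive step
being `(1 + t) d/dt (F ∘ log (1 + t)) = F' ∘ log (1 + t)` together with the Leibniz rules for
`d/dt` and `t d/dt`.
-/

/-- Coefficients of the product of two exponential generating functions. -/
def binomConv {R : Type*} [CommSemiring R] (a b : ℕ → R) (n : ℕ) : R :=
  ∑ k ∈ range (n + 1), (n.choose k : R) * (a k * b (n - k))

theorem binomConv_succ {R : Type*} [CommSemiring R] (a b : ℕ → R) (n : ℕ) :
    binomConv a b (n + 1) =
      binomConv (fun k => a (k + 1)) b n + binomConv a (fun k => b (k + 1)) n := by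
  rw [binomConv, sum_choose_succ_mul (fun i j => a i * b j), add_comm]
  congr 1
  refine sum_congr rfl fun k hk => ?_
  rw [show n + 1 - k = n - k + 1 by have := mem_range.mp hk; omega]

theorem binomConv_sub_left {R : Type*} [CommRing R] (a a' b : ℕ → R) (n : ℕ) :
    binomConv (fun k => a k - a' k) b n = binomConv a b n - binomConv a' b n := by
  simp only [binomConv, ← sum_sub_distrib, sub_mul, mul_sub]

theorem binomConv_sub_right {R : Type*} [CommRing R] (a b b' : ℕ → R) (n : ℕ) :
    binomConv a (fun k => b k - b' k) n = binomConv a b n - binomConv a b' n := by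
  simp only [binomConv, ← sum_sub_distrib, mul_sub]

/-- Leibniz rule for the Euler operator `t d/dt`. -/
theorem binomConv_index_mul_add_binomConv_index_mul {R : Type*} [CommRing R]
    (a b : ℕ → R) (n : ℕ) :
    binomConv (fun k => k * a k) b n + binomConv a (fun k => k * b k) n =
      n * binomConv a b n := by
  rw [binomConv, binomConv, binomConv, mul_sum, ← sum_add_distrib]
  refine sum_congr rfl fun k hk => ?_
  rw [Nat.cast_sub (by have := mem_range.mp hk; omega)]
  ring

theorem coeff_mul_egf {K : Type*} [Field K] [CharZero K] (a b : ℕ → K) (n : ℕ) :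
    coeff n ((mk fun k => a k / k.factorial) * mk fun k => b k / k.factorial) =
      binomConv a b n / n.factorial := by
  rw [coeff_mul, Nat.sum_antidiagonal_eq_sum_range_succ_mk, binomConv, sum_div]
  refine sum_congr rfl fun k hk => ?_
  have hkn : k ≤ n := Nat.lt_succ_iff.mp (mem_range.mp hk)
  have : (n.factorial : K) ≠ 0 := Nat.cast_ne_zero.mpr n.factorial_ne_zero
  simp only [coeff_mk]
  rw [Nat.cast_choose K hkn]
  field_simp

theorem S1_eq_zero_of_lt : ∀ {n m : ℕ}, n < m → S1 n m = 0
  | 0, _ + 1, _ => rfl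
  | n + 1, k + 1, h => by
    rw [S1, S1_eq_zero_of_lt (by omega : n < k), S1_eq_zero_of_lt (by omega : n < k + 1)]
    ring

theorem natCast_mul_S1_zero (n : ℕ) : (n : ℚ) * S1 n 0 = 0 := by
  cases n <;> simp [S1]

def stirlingFirstTransform (a : ℕ → ℚ) (n : ℕ) : ℚ :=
  ∑ m ∈ range (n + 1), S1 n m * a m

theorem stirlingFirstTransform_add (a b : ℕ → ℚ) (n : ℕ) :
    stirlingFirstTransform (a + b) n = stirlingFirstTransform a n + stirlingFirstTransform b n := by
  simp only [stirlingFirstTransform, Pi.add_apply, mul_add, sum_add_distrib]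

/-- The coefficient form of `(1 + t) d/dt (F ∘ log (1 + t)) = F' ∘ log (1 + t)`. -/
theorem stirlingFirstTransform_succ (a : ℕ → ℚ) (n : ℕ) :
    stirlingFirstTransform a (n + 1) =
      stirlingFirstTransform (fun m => a (m + 1)) n - n * stirlingFirstTransform a n := by
  have hext : stirlingFirstTransform a n = ∑ m ∈ range (n + 2), S1 n m * a m := by
    rw [stirlingFirstTransform, sum_range_succ _ (n + 1), S1_eq_zero_of_lt (by omega),
      zero_mul, add_zero]
  rw [hext, sum_range_succ', mul_add, mul_sum, ← mul_assoc, natCast_mul_S1_zero,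
    stirlingFirstTransform, stirlingFirstTransform, sum_range_succ' _ (n + 1)]
  simp only [S1, sub_mul, sum_sub_distrib, mul_assoc]
  ring

theorem stirlingFirstTransform_binomConv (n : ℕ) :
    ∀ a b : ℕ → ℚ, stirlingFirstTransform (binomConv a b) n =
      binomConv (stirlingFirstTransform a) (stirlingFirstTransform b) n := by
  induction n with
  | zero => intro a b; simp [stirlingFirstTransform, binomConv, S1]
  | succ n ih =>
    intro a b
    have hshift : ∀ c : ℕ → ℚ, (fun k => stirlingFirstTransform c (k + 1)) =
        fun k => stirlingFirstTransform (fun m => c (m + 1)) k -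
          k * stirlingFirstTransform c k :=
      fun c => funext fun k => stirlingFirstTransform_succ c k
    have hconv : (fun m => binomConv a b (m + 1)) =
        binomConv (fun k => a (k + 1)) b + binomConv a (fun k => b (k + 1)) :=
      funext fun m => binomConv_succ a b m
    rw [stirlingFirstTransform_succ, hconv, stirlingFirstTransform_add, ih, ih, ih,
      binomConv_succ, hshift, hshift, binomConv_sub_left, binomConv_sub_right,
      ← binomConv_index_mul_add_binomConv_index_mul]
    ring

theorem B_zero (l : ℚ) : B l 0 = 1 := by
  ext n
  rcases n with _ | n
  · simp [B, df]
  · simp [B, df, prod_range_succ']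

theorem constantCoeff_B (l x : ℚ) : constantCoeff (B l x) = 1 := by
  simp [B, df, ← coeff_zero_eq_constantCoeff_apply]

theorem eq_binomConv_df_of_egf_mul_eq (l : ℚ) (r : ℕ) (E : ℕ → ℚ → ℚ)
    (hE : ∀ x : ℚ, (mk fun n => E n x / n.factorial) * (B l 1 + 1) ^ r = 2 ^ r * B l x)
    (m : ℕ) (x : ℚ) :
    E m x = binomConv (df l x) (fun j => E j 0) m := by
  have hunit : (B l 1 + 1) ^ r ≠ 0 := by
    refine pow_ne_zero r fun h => ?_
    have := congrArg constantCoeff h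
    norm_num [constantCoeff_B] at this
  have hegf : (mk fun n => E n x / n.factorial) = B l x * mk fun n => E n 0 / n.factorial := by
    refine mul_right_cancel₀ hunit ?_
    rw [hE, mul_assoc, hE, B_zero, mul_one, mul_comm]
  have hcoeff := congrArg (coeff m) hegf
  rw [B, coeff_mul_egf, coeff_mk,
    div_left_inj' (Nat.cast_ne_zero.mpr m.factorial_ne_zero)] at hcoeff
  exact hcoeff

theorem stmt16_general (l : ℚ) (r : ℕ) (E : ℕ → ℚ → ℚ)
    (hE : ∀ x : ℚ, (PowerSeries.mk fun n => E n x / n.factorial) * (B l 1 + 1) ^ r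
      = 2 ^ r * B l x) :
    ∀ (n : ℕ) (x : ℚ), Ch E n x =
      ∑ k ∈ Finset.range (n + 1), ∑ m ∈ Finset.range (k + 1),
        (n.choose k : ℚ) * df l x m * S1 k m * Ch E (n - k) 0 := by
  intro n x
  have happell : (fun m => E m x) = binomConv (df l x) (fun j => E j 0) :=
    funext fun m => eq_binomConv_df_of_egf_mul_eq l r E hE m x
  calc Ch E n x = stirlingFirstTransform (fun m => E m x) n := rfl
    _ = binomConv (stirlingFirstTransform (df l x)) (fun k => Ch E k 0) n := by
      rw [happell, stirlingFirstTransform_binomConv]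
      rfl
    _ = _ := by
      simp only [binomConv, stirlingFirstTransform, sum_mul, mul_sum]
      exact sum_congr rfl fun k _ => sum_congr rfl fun m _ => by ring

/-- `Ch⁽ʳ⁾_{n,λ}(x) = Σ_{k≤n} Σ_{m≤k} C(n,k) (x)_{m,λ} S₁(k,m) Ch⁽ʳ⁾_{n-k,λ}`. -/
theorem stmt16 (l : ℚ) (r : ℕ) (hr : 1 ≤ r) (E : ℕ → ℚ → ℚ)
    (hE : ∀ x : ℚ, (PowerSeries.mk fun n => E n x / n.factorial) * (B l 1 + 1) ^ r
      = 2 ^ r * B l x) :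
    ∀ (n : ℕ) (x : ℚ), Ch E n x =
      ∑ k ∈ Finset.range (n + 1), ∑ m ∈ Finset.range (k + 1),
        (n.choose k : ℚ) * df l x m * S1 k m * Ch E (n - k) 0 :=
  stmt16_general l r E hE
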